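/- arXiv:2201.00159 — 2 statements merged into one kernel-verified Lean document; each statement's English description precedes it below -/
import Mathlib

section
/- Let G(t) = ∫₀ᵗ (N/2 · F(s)f'(s)/f(s)² − (N−2)/2)^{1/N} ds for t ≥ 0, where the integrand is well defined and positive by assumption. Then for every t > 0, G(t)^N ≤ t^N − (N/2)·t^{N−1}·F(t)/f(t). -/
/-!
Put `φ(s) = s - (N/2) F(s)/f(s)`, so that `φ' = h`. Positivity of `h` forces `F f' > 0`, hence `f`
is increasing and `0 ≤ F(s)/f(s) ≤ s`, so `φ(0+) = 0`. Jensen's inequality for `x ↦ x^N` on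
`[ε, t]` gives `(∫_ε^t h^(1/N))^N ≤ (t - ε)^(N-1) (φ(t) - φ(ε))`; let `ε → 0`.
-/

open Real Set MeasureTheory Filter Topology Interval

theorem pow_integral_le_mul_integral_pow {u : ℝ → ℝ} {a b : ℝ} (hab : a < b) {n : ℕ}
    (hn : n ≠ 0) (hu : ContinuousOn u (Icc a b)) (hu0 : ∀ x ∈ Ioc a b, 0 ≤ u x) :
    (∫ x in a..b, u x) ^ n ≤ (b - a) ^ (n - 1) * ∫ x in a..b, u x ^ n := by
  have hΙ : Ι a b = Ioc a b := uIoc_of_le hab.le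
  have hu_int : IntegrableOn u (Ι a b) :=
    hΙ ▸ hu.integrableOn_Icc.mono_set Ioc_subset_Icc_self
  have hun_int : IntegrableOn (fun x => u x ^ n) (Ι a b) :=
    hΙ ▸ (hu.pow n).integrableOn_Icc.mono_set Ioc_subset_Icc_self
  have jensen := (convexOn_pow n).map_set_average_le (continuous_pow n).continuousOn isClosed_Ici
    (by simp [hΙ, hab]) (by simp [hΙ]) (hΙ ▸ (ae_restrict_of_forall_mem measurableSet_Ioc hu0))
    hu_int hun_int
  rw [interval_average_eq, interval_average_eq, smul_eq_mul, smul_eq_mul, mul_pow] at jensen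
  have hba : 0 < b - a := sub_pos.2 hab
  have hpow : (b - a) ^ n = (b - a) ^ (n - 1) * (b - a) := by
    rw [← pow_succ, Nat.sub_add_cancel (Nat.one_le_iff_ne_zero.2 hn)]
  calc (∫ x in a..b, u x) ^ n = (b - a) ^ n * ((b - a)⁻¹ ^ n * (∫ x in a..b, u x) ^ n) := by
        rw [inv_pow, mul_inv_cancel_left₀ (pow_pos hba n).ne']
    _ ≤ (b - a) ^ n * ((b - a)⁻¹ * ∫ x in a..b, u x ^ n) := by gcongr
    _ = (b - a) ^ (n - 1) * ∫ x in a..b, u x ^ n := by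
        rw [hpow]; field_simp

theorem tendsto_intervalIntegral_nhdsGT {u : ℝ → ℝ} {a b : ℝ} (hab : a < b)
    (hu : IntervalIntegrable u volume a b) :
    Tendsto (fun ε => ∫ x in ε..b, u x) (𝓝[>] a) (𝓝 (∫ x in a..b, u x)) := by
  have hcont := intervalIntegral.continuousOn_primitive_interval_left
    (uIcc_of_le hab.le ▸ (intervalIntegrable_iff_integrableOn_Icc_of_le hab.le).1 hu) a
    left_mem_uIcc
  rw [← nhdsWithin_Ioo_eq_nhdsGT hab]
  exact hcont.tendsto.mono_left (nhdsWithin_mono a (uIcc_of_le hab.le ▸ Ioo_subset_Icc_self))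

theorem intervalIntegral_le_mul_of_monotoneOn {f : ℝ → ℝ} {a b : ℝ} (hab : a ≤ b)
    (hf : MonotoneOn f (Ioc a b)) (hf_int : IntervalIntegrable f volume a b) :
    ∫ x in a..b, f x ≤ (b - a) * f b := by
  calc ∫ x in a..b, f x ≤ ∫ _ in a..b, f b :=
        intervalIntegral.integral_mono_on_of_le_Ioo hab hf_int intervalIntegrable_const
          fun x hx => hf (Ioo_subset_Ioc_self hx) (right_mem_Ioc.2 (hx.1.trans hx.2)) hx.2.le
    _ = (b - a) * f b := by simp

theorem hasDerivAt_primitive_div {F f : ℝ → ℝ} {f' x : ℝ} (hF : HasDerivAt F (f x) x)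
    (hf : HasDerivAt f f' x) (hx : f x ≠ 0) :
    HasDerivAt (fun y => F y / f y) (1 - F x * f' / f x ^ 2) x := by
  refine (hF.div hf hx).congr_deriv ?_
  field_simp

theorem pow_integral_rpow_inv_le_of_hasDerivAt {n : ℕ} (hn : n ≠ 0) {g φ : ℝ → ℝ} {t : ℝ}
    (ht : 0 < t) (hg : ContinuousOn g (Ioc 0 t)) (hg0 : ∀ s ∈ Ioc 0 t, 0 ≤ g s)
    (hφ : ∀ s ∈ Ioc 0 t, HasDerivAt φ (g s) s) (hφ0 : Tendsto φ (𝓝[>] 0) (𝓝 0)) :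
    (∫ s in (0)..t, g s ^ ((1 : ℝ) / n)) ^ n ≤ t ^ (n - 1) * φ t := by
  set u : ℝ → ℝ := fun s => g s ^ ((1 : ℝ) / n)
  have hu0 : ∀ s ∈ Ioc 0 t, 0 ≤ u s := fun s hs => rpow_nonneg (hg0 s hs) _
  have htrunc : ∀ ε ∈ Ioo 0 t,
      0 ≤ (∫ s in ε..t, u s) ^ n ∧ (∫ s in ε..t, u s) ^ n ≤ (t - ε) ^ (n - 1) * (φ t - φ ε) := by
    intro ε hε
    have hsub : Icc ε t ⊆ Ioc 0 t := Icc_subset_Ioc hε.1 le_rfl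
    have hsub' : Ioc ε t ⊆ Ioc 0 t := Ioc_subset_Ioc_left hε.1.le
    have hg_cont : ContinuousOn g (Icc ε t) := hg.mono hsub
    refine ⟨pow_nonneg (intervalIntegral.integral_nonneg hε.2.le
      fun s hs => hu0 s (hsub hs)) n, ?_⟩
    calc (∫ s in ε..t, u s) ^ n ≤ (t - ε) ^ (n - 1) * ∫ s in ε..t, u s ^ n :=
          pow_integral_le_mul_integral_pow hε.2 hn
            (hg_cont.rpow_const fun _ _ => Or.inr (by positivity)) fun s hs => hu0 s (hsub' hs)
      _ = (t - ε) ^ (n - 1) * ∫ s in ε..t, g s := by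
          congr 1
          refine intervalIntegral.integral_congr fun s hs => ?_
          rw [uIcc_of_le hε.2.le] at hs
          simp only [u, one_div]
          exact rpow_inv_natCast_pow (hg0 s (hsub hs)) hn
      _ = (t - ε) ^ (n - 1) * (φ t - φ ε) := by
          rw [intervalIntegral.integral_eq_sub_of_hasDerivAt
            (fun s hs => hφ s (hsub (uIcc_of_le hε.2.le ▸ hs)))
            (hg_cont.intervalIntegrable_of_Icc hε.2.le)]
  have hlim : Tendsto (fun ε => (t - ε) ^ (n - 1) * (φ t - φ ε)) (𝓝[>] 0)
      (𝓝 (t ^ (n - 1) * φ t)) := by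
    have hpow : Tendsto (fun ε : ℝ => (t - ε) ^ (n - 1)) (𝓝[>] 0) (𝓝 (t ^ (n - 1))) := by
      have hcont : Continuous fun ε : ℝ => (t - ε) ^ (n - 1) := by fun_prop
      exact (hcont.tendsto' 0 _ (by simp)).mono_left nhdsWithin_le_nhds
    simpa using hpow.mul (tendsto_const_nhds.sub hφ0)
  have hevent : ∀ᶠ ε in 𝓝[>] (0 : ℝ), ε ∈ Ioo 0 t := Ioo_mem_nhdsGT ht
  by_cases hu_int : IntervalIntegrable u volume 0 t
  · exact le_of_tendsto_of_tendsto ((tendsto_intervalIntegral_nhdsGT ht hu_int).pow n) hlim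
      (hevent.mono fun ε hε => (htrunc ε hε).2)
  · rw [intervalIntegral.integral_undef hu_int, zero_pow hn]
    exact ge_of_tendsto hlim (hevent.mono fun ε hε => (htrunc ε hε).1.trans (htrunc ε hε).2)

theorem intervalIntegrable_and_integral_pos_of_mul_pos {f : ℝ → ℝ} {s c : ℝ} (hs : 0 < s)
    (hf_pos : ∀ x ∈ Ioi 0, 0 < f x) (hmul : 0 < (∫ x in 0..s, f x) * c) :
    IntervalIntegrable f volume 0 s ∧ 0 < ∫ x in 0..s, f x := by
  -- a non-integrable `f` would have the junk integral `0`
  have hf_int := intervalIntegral.intervalIntegrable_of_integral_ne_zero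
    (left_ne_zero_of_mul hmul.ne')
  exact ⟨hf_int, intervalIntegral.intervalIntegral_pos_of_pos_on hf_int
    (fun x hx => hf_pos x hx.1) hs⟩

theorem hasDerivAt_integral_of_mul_pos {f : ℝ → ℝ} {s c : ℝ} (hs : 0 < s)
    (hf_cont : ContinuousOn f (Ioi 0)) (hf_pos : ∀ x ∈ Ioi 0, 0 < f x)
    (hmul : 0 < (∫ x in 0..s, f x) * c) :
    HasDerivAt (fun u => ∫ x in 0..u, f x) (f s) s :=
  intervalIntegral.integral_hasDerivAt_right
    (intervalIntegrable_and_integral_pos_of_mul_pos hs hf_pos hmul).1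
    (hf_cont.stronglyMeasurableAtFilter isOpen_Ioi s hs) (hf_cont.continuousAt (Ioi_mem_nhds hs))

theorem integral_div_mem_Icc_of_mul_deriv_pos {f : ℝ → ℝ}
    (hf_diff : ∀ x ∈ Ioi 0, DifferentiableAt ℝ f x) (hf_pos : ∀ x ∈ Ioi 0, 0 < f x)
    (hmul : ∀ x ∈ Ioi 0, 0 < (∫ y in 0..x, f y) * deriv f x) {s : ℝ} (hs : 0 < s) :
    (∫ x in 0..s, f x) / f s ∈ Icc 0 s := by
  have hf'_pos : ∀ x ∈ interior (Ioi (0 : ℝ)), 0 < deriv f x := fun x hx => by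
    rw [interior_Ioi] at hx
    exact pos_of_mul_pos_right (hmul x hx)
      (intervalIntegrable_and_integral_pos_of_mul_pos hx hf_pos (hmul x hx)).2.le
  have hf_mono : StrictMonoOn f (Ioi 0) := strictMonoOn_of_deriv_pos (convex_Ioi 0)
    (fun x hx => (hf_diff x hx).continuousAt.continuousWithinAt) hf'_pos
  obtain ⟨hf_int, hF_pos⟩ := intervalIntegrable_and_integral_pos_of_mul_pos hs hf_pos (hmul s hs)
  refine ⟨(div_pos hF_pos (hf_pos s hs)).le, (div_le_iff₀ (hf_pos s hs)).2 ?_⟩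
  simpa using intervalIntegral_le_mul_of_monotoneOn hs.le
    (hf_mono.monotoneOn.mono fun x hx => hx.1) hf_int

theorem tendsto_sub_mul_nhdsGT_zero {r : ℝ → ℝ} (c : ℝ) (hr : ∀ s ∈ Ioi 0, r s ∈ Icc 0 s) :
    Tendsto (fun s => s - c * r s) (𝓝[>] 0) (𝓝 0) := by
  have hid : Tendsto (fun s : ℝ => s) (𝓝[>] 0) (𝓝 0) := nhdsWithin_le_nhds
  have hr0 : Tendsto r (𝓝[>] 0) (𝓝 0) :=
    tendsto_of_tendsto_of_tendsto_of_le_of_le' tendsto_const_nhds hid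
      (eventually_mem_nhdsWithin.mono fun s hs => (hr s hs).1)
      (eventually_mem_nhdsWithin.mono fun s hs => (hr s hs).2)
  simpa using hid.sub (hr0.const_mul c)

theorem stmt5_general (N : ℕ) (hN : 2 ≤ N) (f : ℝ → ℝ) (δ : ℝ) (hδ : 0 < δ)
    (hf_diff : ∀ s : ℝ, 0 < s → DifferentiableAt ℝ f s)
    (hderiv_cont : ContinuousOn (deriv f) (Set.Ioi 0))
    (hf_pos : ∀ s : ℝ, 0 < s → 0 < f s)
    (F : ℝ → ℝ) (hF : ∀ s : ℝ, F s = ∫ τ in (0)..s, f τ)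
    (h : ℝ → ℝ)
    (hh : ∀ s : ℝ, h s = (N : ℝ) / 2 * (F s * deriv f s / (f s) ^ 2) - ((N : ℝ) - 2) / 2)
    (hh_pos : ∀ s : ℝ, 0 < s → (N : ℝ) / 2 * δ ≤ h s)
    (G : ℝ → ℝ) (hG : ∀ t : ℝ, G t = ∫ s in (0)..t, (h s) ^ ((1 : ℝ) / N)) :
    ∀ t : ℝ, 0 < t →
      (G t) ^ N ≤ t ^ N - (N : ℝ) / 2 * t ^ (N - 1) * (F t / f t) := by
  intro t ht
  have hN' : (2 : ℝ) ≤ N := by exact_mod_cast hN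
  have hf_cont : ContinuousOn f (Ioi 0) := fun s hs =>
    (hf_diff s hs).continuousAt.continuousWithinAt
  have h_pos : ∀ s, 0 < s → 0 < h s := fun s hs =>
    (by positivity : 0 < (N : ℝ) / 2 * δ).trans_le (hh_pos s hs)
  have hmul : ∀ s ∈ Ioi 0, 0 < F s * deriv f s := fun s hs => by
    have : 0 < F s * deriv f s / f s ^ 2 := by nlinarith [h_pos s hs, hh s]
    exact (div_pos_iff_of_pos_right (pow_pos (hf_pos s hs) 2)).1 this
  simp only [hF] at hmul
  have hF_deriv : ∀ s, 0 < s → HasDerivAt F (f s) s := fun s hs =>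
    funext hF ▸ hasDerivAt_integral_of_mul_pos hs hf_cont hf_pos (hmul s hs)
  have hφ : ∀ s ∈ Ioc 0 t, HasDerivAt (fun s => s - (N : ℝ) / 2 * (F s / f s)) (h s) s :=
    fun s hs => ((hasDerivAt_id s).sub ((hasDerivAt_primitive_div (hF_deriv s hs.1)
      (hf_diff s hs.1).hasDerivAt (hf_pos s hs.1).ne').const_mul _)).congr_deriv (by rw [hh]; ring)
  have hφ0 := tendsto_sub_mul_nhdsGT_zero ((N : ℝ) / 2) fun s hs =>
    hF s ▸ integral_div_mem_Icc_of_mul_deriv_pos hf_diff hf_pos hmul hs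
  have hh_cont : ContinuousOn h (Ioc 0 t) := by
    have hF_cont : ContinuousOn F (Ioi 0) := fun s hs =>
      (hF_deriv s hs).continuousAt.continuousWithinAt
    refine (ContinuousOn.sub (continuousOn_const.mul ((hF_cont.mul hderiv_cont).div
      (hf_cont.pow 2) fun s hs => (pow_pos (hf_pos s hs) 2).ne')) continuousOn_const).congr
      (fun s _ => hh s) |>.mono Ioc_subset_Ioi_self
  calc G t ^ N = (∫ s in (0)..t, h s ^ ((1 : ℝ) / N)) ^ N := by rw [hG]
    _ ≤ t ^ (N - 1) * (t - (N : ℝ) / 2 * (F t / f t)) :=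
        pow_integral_rpow_inv_le_of_hasDerivAt (by omega) ht hh_cont
          (fun s hs => (h_pos s hs.1).le) hφ hφ0
    _ = t ^ N - (N : ℝ) / 2 * t ^ (N - 1) * (F t / f t) := by
        rw [← pow_sub_one_mul (by omega : N ≠ 0)]; ring

theorem stmt5 (N : ℕ) (hN : 2 ≤ N) (f : ℝ → ℝ) (δ : ℝ) (hδ : 0 < δ)
    (hf_cont : ContinuousOn f (Set.Ioi 0))
    (hf_diff : ∀ s : ℝ, 0 < s → DifferentiableAt ℝ f s)
    (hderiv_cont : ContinuousOn (deriv f) (Set.Ioi 0))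
    (hf_pos : ∀ s : ℝ, 0 < s → 0 < f s)
    (F : ℝ → ℝ) (hF : ∀ s : ℝ, F s = ∫ τ in (0)..s, f τ)
    (h : ℝ → ℝ)
    (hh : ∀ s : ℝ, h s = (N : ℝ) / 2 * (F s * deriv f s / (f s) ^ 2) - ((N : ℝ) - 2) / 2)
    (hh_pos : ∀ s : ℝ, 0 < s → (N : ℝ) / 2 * δ ≤ h s)
    (G : ℝ → ℝ) (hG : ∀ t : ℝ, G t = ∫ s in (0)..t, (h s) ^ ((1 : ℝ) / N)) :
    ∀ t : ℝ, 0 < t →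
      (G t) ^ N ≤ t ^ N - (N : ℝ) / 2 * t ^ (N - 1) * (F t / f t) :=
  stmt5_general N hN f δ hδ hf_diff hderiv_cont hf_pos F hF h hh hh_pos G hG
end

section
/- Let t : ℕ → ℝ with t_n ≥ 1 for all n, and suppose there exist constants K > 0 and a sequence δ_n → 0 with δ_n ≥ 0 such that for all large n: t_n^N ≥ K · exp(2N log n · ((t_n/(1+δ_n)^{1/N})^{N/(N−1)} − 1)) / (t_n/(1+δ_n)^{1/N})^{N/(N−1)}. If in addition t_n^N ≥ 1 + δ for all n for some fixed δ > 0, then one reaches a contradiction; hence liminf_{n→∞} t_n ≤ 1, and combined with t_n ≥ 1, lim_{n→∞} t_n = 1. -/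
/-!
Put `a = (t / (1 + δ)^{1/N})^{N/(N-1)}`, so that `t^N = a^{N-1} (1 + δ)`. Taking logarithms in the
hypothesis and using `log a ≤ a - 1` gives `(2N log n - N)(a_n - 1) ≤ log (1 + δ_n) - log K`, whose
right side stays bounded. Hence `a_n ≤ 1 + o(1)`, so `1 ≤ t_n ≤ t_n^N ≤ (1 + o(1))^{N-1} (1 + δ_n) → 1`.
-/

open Real Filter Topology

lemma rpow_div_rpow_pow_mul_eq_pow {N : ℕ} (hN : 2 ≤ N) {t u : ℝ} (ht : 0 ≤ t) (hu : 0 < u) :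
    ((t / u ^ ((1 : ℝ) / N)) ^ ((N : ℝ) / (N - 1))) ^ (N - 1) * u = t ^ N := by
  have hN1 : ((N - 1 : ℕ) : ℝ) = N - 1 := by rw [Nat.cast_sub (by omega)]; norm_num
  have hN1_pos : (0 : ℝ) < N - 1 := by
    have : (2 : ℝ) ≤ N := by exact_mod_cast hN
    linarith
  have hroot : (u ^ ((1 : ℝ) / N)) ^ N = u := by
    rw [← rpow_natCast, ← rpow_mul hu.le, one_div_mul_cancel (by positivity), rpow_one]
  rw [← rpow_natCast _ (N - 1), ← rpow_mul (by positivity), hN1,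
    div_mul_cancel₀ _ hN1_pos.ne', rpow_natCast, div_pow, hroot,
    div_mul_cancel₀ _ hu.ne']

lemma mul_sub_one_le_log_sub_log {N : ℕ} {K L a u : ℝ} (hK : 0 < K) (ha : 0 < a) (hu : 0 < u)
    (h : K * exp (L * (a - 1)) ≤ a ^ N * u) :
    (L - N) * (a - 1) ≤ log u - log K := by
  have hlog := log_le_log (by positivity) h
  rw [log_mul hK.ne' (exp_ne_zero _), log_exp, log_mul (by positivity) hu.ne', log_pow] at hlog
  have : (N : ℝ) * log a ≤ N * (a - 1) :=
    mul_le_mul_of_nonneg_left (log_le_sub_one_of_pos ha) N.cast_nonneg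
  linarith

lemma eventually_le_one_add_div_of_mul_sub_one_le {α : Type*} {l : Filter α} {a g L : α → ℝ}
    (hL : Tendsto L l atTop) (h : ∀ᶠ x in l, L x * (a x - 1) ≤ g x) :
    ∀ᶠ x in l, a x ≤ 1 + g x / L x := by
  filter_upwards [h, hL.eventually_gt_atTop 0] with x hx hLx
  rw [← sub_le_iff_le_add', le_div_iff₀ hLx, mul_comm]
  exact hx

lemma tendsto_one_of_one_le_of_pow_le {α : Type*} {l : Filter α} {N : ℕ} (hN : N ≠ 0)
    {t r : α → ℝ} (ht : ∀ x, 1 ≤ t x) (hr : Tendsto r l (𝓝 1))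
    (h : ∀ᶠ x in l, t x ^ N ≤ r x) :
    Tendsto t l (𝓝 1) :=
  tendsto_of_tendsto_of_tendsto_of_le_of_le' tendsto_const_nhds hr (.of_forall ht)
    (h.mono fun x hx => (le_self_pow₀ (ht x) hN).trans hx)

theorem stmt18 (N : ℕ) (hN : 2 ≤ N) (t δ' : ℕ → ℝ) (K : ℝ) (hK : 0 < K)
    (ht : ∀ n, 1 ≤ t n) (hδ'_nonneg : ∀ n, 0 ≤ δ' n)
    (hδ'_lim : Tendsto δ' atTop (nhds 0))
    (hineq : ∀ᶠ n : ℕ in atTop,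
      K * Real.exp (2 * N * Real.log n *
          ((t n / (1 + δ' n) ^ ((1 : ℝ) / N)) ^ ((N : ℝ) / (N - 1)) - 1)) /
        (t n / (1 + δ' n) ^ ((1 : ℝ) / N)) ^ ((N : ℝ) / (N - 1)) ≤ t n ^ N) :
    (∀ δ : ℝ, 0 < δ → ¬ (∀ n, 1 + δ ≤ t n ^ N)) ∧
    Filter.liminf t atTop ≤ 1 ∧
    Tendsto t atTop (nhds 1) := by
  set a : ℕ → ℝ := fun n => (t n / (1 + δ' n) ^ ((1 : ℝ) / N)) ^ ((N : ℝ) / (N - 1))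
  set L : ℕ → ℝ := fun n => 2 * N * log n - N
  set g : ℕ → ℝ := fun n => log (1 + δ' n) - log K
  have hu n : 0 < 1 + δ' n := by linarith [hδ'_nonneg n]
  have ha n : 0 < a n :=
    rpow_pos_of_pos (div_pos (by linarith [ht n]) (rpow_pos_of_pos (hu n) _)) _
  have htN n : a n ^ (N - 1) * (1 + δ' n) = t n ^ N :=
    rpow_div_rpow_pow_mul_eq_pow hN (by linarith [ht n]) (hu n)
  have hL : Tendsto L atTop atTop := tendsto_atTop_add_const_right _ _ <|
    (tendsto_log_atTop.comp tendsto_natCast_atTop_atTop).const_mul_atTop (by positivity)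
  have hg : Tendsto g atTop (𝓝 (log (1 + 0) - log K)) :=
    ((continuousAt_log (by norm_num)).tendsto.comp (hδ'_lim.const_add 1)).sub_const _
  have hmul : ∀ᶠ n in atTop, L n * (a n - 1) ≤ g n := hineq.mono fun n hn => by
    refine mul_sub_one_le_log_sub_log (L := 2 * N * log n) hK (ha n) (hu n) ?_
    rw [← htN, div_le_iff₀ (ha n), mul_comm _ (a n), ← mul_assoc, ← pow_succ',
      Nat.sub_add_cancel (by omega)] at hn
    exact hn
  have hr : Tendsto (fun n => (1 + g n / L n) ^ (N - 1) * (1 + δ' n)) atTop (𝓝 1) := by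
    simpa using (((hg.div_atTop hL).const_add 1).pow (N - 1)).mul (hδ'_lim.const_add 1)
  have key : Tendsto t atTop (𝓝 1) := tendsto_one_of_one_le_of_pow_le (by omega) ht hr <|
    (eventually_le_one_add_div_of_mul_sub_one_le hL hmul).mono fun n hn =>
      htN n ▸ mul_le_mul_of_nonneg_right (pow_le_pow_left₀ (ha n).le hn _) (hu n).le
  refine ⟨fun δ hδ h => ?_, key.liminf_eq.le, key⟩
  have hlt : (1 : ℝ) ^ N < 1 + δ := by rw [one_pow]; linarith
  obtain ⟨n, hn⟩ := ((key.pow N).eventually_lt_const hlt).exists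
  exact (h n).not_gt hn
end
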